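/- arXiv:2503.13170 — 5 statements merged into one kernel-verified Lean document; each statement's English description precedes it below -/
import Mathlib

section
/- Let V₁, V₂ be Hilbert spaces and a : V₁ × V₂ → ℝ a bounded bilinear form. Define on V = V₁ × V₂ (with product norm ‖v‖² = ‖v₁‖₁² + ‖v₂‖₂²) the symmetric-like bilinear form 𝐚(v, φ) = a(v₁, φ₂) + a(φ₁, v₂). Then sup over ‖v‖ = 1 and ‖φ‖ = 1 of |𝐚(v, φ)| equals M_a, where M_a = sup over ‖v₁‖₁ = 1, ‖v₂‖₂ = 1 of |a(v₁, v₂)|. -/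
/-!
Rescaling gives `|a x y| ≤ M_a ‖x‖ ‖y‖`, so by the triangle inequality
`|𝐚(v, φ)| ≤ M_a (‖v₁‖ ‖φ₂‖ + ‖φ₁‖ ‖v₂‖)`, and the bracket is at most `‖v‖ ‖φ‖` by Cauchy–Schwarz
in `ℝ²`. Conversely `v = (v₁, 0)`, `φ = (0, v₂)` give `𝐚(v, φ) = a(v₁, v₂)`, so every value
of `|a|` on unit vectors is a value of `|𝐚|` on unit vectors.
-/

open WithLp

theorem WithLp.prod_norm_fst_mul_norm_snd_add_le {E F : Type*}
    [SeminormedAddCommGroup E] [SeminormedAddCommGroup F] (v φ : WithLp 2 (E × F)) :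
    ‖v.fst‖ * ‖φ.snd‖ + ‖φ.fst‖ * ‖v.snd‖ ≤ ‖v‖ * ‖φ‖ := by
  have hv := prod_norm_sq_eq_of_L2 v
  have hφ := prod_norm_sq_eq_of_L2 φ
  have hCS : (‖v.fst‖ * ‖φ.snd‖ + ‖φ.fst‖ * ‖v.snd‖) ^ 2 ≤ (‖v‖ * ‖φ‖) ^ 2 := by
    rw [mul_pow, hv, hφ]
    nlinarith [sq_nonneg (‖v.fst‖ * ‖φ.fst‖ - ‖v.snd‖ * ‖φ.snd‖)]
  exact le_of_sq_le_sq hCS (by positivity)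

namespace LinearMap

variable {E F : Type*} [NormedAddCommGroup E] [NormedSpace ℝ E]
  [NormedAddCommGroup F] [NormedSpace ℝ F]

theorem abs_apply_le_of_mem_upperBounds (a : E →ₗ[ℝ] F →ₗ[ℝ] ℝ) {M : ℝ}
    (hM : M ∈ upperBounds {t : ℝ | ∃ x : E, ∃ y : F, ‖x‖ = 1 ∧ ‖y‖ = 1 ∧ t = |a x y|})
    (x : E) (y : F) : |a x y| ≤ M * (‖x‖ * ‖y‖) := by
  rcases eq_or_ne x 0 with rfl | hx
  · simp
  rcases eq_or_ne y 0 with rfl | hy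
  · simp
  have hx' : 0 < ‖x‖ := norm_pos_iff.mpr hx
  have hy' : 0 < ‖y‖ := norm_pos_iff.mpr hy
  have hunit : |a (‖x‖⁻¹ • x) (‖y‖⁻¹ • y)| ≤ M :=
    hM ⟨_, _, norm_smul_inv_norm hx, norm_smul_inv_norm hy, rfl⟩
  have hscale : |a (‖x‖⁻¹ • x) (‖y‖⁻¹ • y)| = |a x y| / (‖x‖ * ‖y‖) := by
    simp only [map_smul, LinearMap.smul_apply, smul_eq_mul, abs_mul, abs_inv, abs_norm]
    field_simp
  rw [hscale, div_le_iff₀ (by positivity)] at hunit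
  linarith

theorem abs_apply_fst_snd_add_apply_fst_snd_le (a : E →ₗ[ℝ] F →ₗ[ℝ] ℝ) {M : ℝ} (hM₀ : 0 ≤ M)
    (hM : M ∈ upperBounds {t : ℝ | ∃ x : E, ∃ y : F, ‖x‖ = 1 ∧ ‖y‖ = 1 ∧ t = |a x y|})
    (v φ : WithLp 2 (E × F)) :
    |a v.fst φ.snd + a φ.fst v.snd| ≤ M * (‖v‖ * ‖φ‖) :=
  calc |a v.fst φ.snd + a φ.fst v.snd| ≤ |a v.fst φ.snd| + |a φ.fst v.snd| := abs_add_le _ _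
    _ ≤ M * (‖v.fst‖ * ‖φ.snd‖) + M * (‖φ.fst‖ * ‖v.snd‖) :=
      add_le_add (a.abs_apply_le_of_mem_upperBounds hM _ _)
        (a.abs_apply_le_of_mem_upperBounds hM _ _)
    _ = M * (‖v.fst‖ * ‖φ.snd‖ + ‖φ.fst‖ * ‖v.snd‖) := by ring
    _ ≤ M * (‖v‖ * ‖φ‖) := mul_le_mul_of_nonneg_left (prod_norm_fst_mul_norm_snd_add_le v φ) hM₀

end LinearMap

theorem stmt3_general {V₁ V₂ : Type*}
    [NormedAddCommGroup V₁] [InnerProductSpace ℝ V₁]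
    [NormedAddCommGroup V₂] [InnerProductSpace ℝ V₂]
    (a : V₁ →ₗ[ℝ] V₂ →ₗ[ℝ] ℝ) (Ma : ℝ)
    (hMa : IsLUB {x : ℝ | ∃ v₁ : V₁, ∃ v₂ : V₂, ‖v₁‖ = 1 ∧ ‖v₂‖ = 1 ∧ x = |a v₁ v₂|} Ma) :
    IsLUB {x : ℝ | ∃ v φ : WithLp 2 (V₁ × V₂), ‖v‖ = 1 ∧ ‖φ‖ = 1 ∧
      x = |a (WithLp.equiv 2 (V₁ × V₂) v).1 (WithLp.equiv 2 (V₁ × V₂) φ).2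
           + a (WithLp.equiv 2 (V₁ × V₂) φ).1 (WithLp.equiv 2 (V₁ × V₂) v).2|} Ma := by
  have hMa_nonneg : 0 ≤ Ma := by
    obtain ⟨_, v₁, v₂, hv₁, hv₂, rfl⟩ := hMa.nonempty
    exact (abs_nonneg _).trans (hMa.1 ⟨v₁, v₂, hv₁, hv₂, rfl⟩)
  refine hMa.of_subset_of_superset isLUB_Iic ?_ ?_
  · rintro _ ⟨v₁, v₂, hv₁, hv₂, rfl⟩
    refine ⟨toLp 2 (v₁, 0), toLp 2 (0, v₂), ?_, ?_, ?_⟩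
    · rw [norm_toLp_fst, hv₁]
    · rw [norm_toLp_snd, hv₂]
    · simp
  · rintro _ ⟨v, φ, hv, hφ, rfl⟩
    simpa [hv, hφ] using a.abs_apply_fst_snd_add_apply_fst_snd_le hMa_nonneg hMa.1 v φ

/-- If `a : V₁ × V₂ → ℝ` is a bounded bilinear form with continuity constant
`Ma = sup_{‖v₁‖=1, ‖v₂‖=1} |a v₁ v₂|`, then the form
`𝐚(v, φ) = a v.1 φ.2 + a φ.1 v.2` on `V = V₁ × V₂` equipped with the ℓ²-product norm
has the same supremum `Ma` over pairs of unit vectors. -/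
theorem stmt3 {V₁ V₂ : Type*}
    [NormedAddCommGroup V₁] [InnerProductSpace ℝ V₁] [CompleteSpace V₁]
    [NormedAddCommGroup V₂] [InnerProductSpace ℝ V₂] [CompleteSpace V₂]
    (a : V₁ →ₗ[ℝ] V₂ →ₗ[ℝ] ℝ) (Ma : ℝ)
    (hMa : IsLUB {x : ℝ | ∃ v₁ : V₁, ∃ v₂ : V₂, ‖v₁‖ = 1 ∧ ‖v₂‖ = 1 ∧ x = |a v₁ v₂|} Ma) :
    IsLUB {x : ℝ | ∃ v φ : WithLp 2 (V₁ × V₂), ‖v‖ = 1 ∧ ‖φ‖ = 1 ∧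
      x = |a (WithLp.equiv 2 (V₁ × V₂) v).1 (WithLp.equiv 2 (V₁ × V₂) φ).2
           + a (WithLp.equiv 2 (V₁ × V₂) φ).1 (WithLp.equiv 2 (V₁ × V₂) v).2|} Ma :=
  stmt3_general a Ma hMa
end

section
/- Let V₁, V₂ be Hilbert spaces and a : V₁ × V₂ → ℝ a bounded bilinear form that is nondegenerate (a(v₁,·) = 0 implies v₁ = 0) and satisfies the inf-sup condition inf_{‖v₂‖₂=1} sup_{‖v₁‖₁=1} a(v₁, v₂) = m_a > 0. Then the transposed inf-sup constant equals m_a as well: inf_{‖v₁‖₁=1} sup_{‖v₂‖₂=1} a(v₁, v₂) = m_a. -/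
/-!
By the Riesz representation theorem, `a v₁ v₂ = ⟪A v₁, v₂⟫` for a bounded operator `A : V₁ → V₂`.
The inner suprema are then `‖A v₁‖` and `‖A† v₂‖`, so the two inf-sup constants are the best
lower bounds of `A` and of `A†` on the unit spheres.

A lower bound `m‖x‖ ≤ ‖T x‖` passes to `T†` whenever `T†` is injective: on `range T` it follows
from `‖T x‖² = re ⟪T† T x, x⟫ ≤ ‖T† T x‖ ‖x‖`, and `range T` is dense since its orthogonal
complement is `ker T†`. Applied to `T = A†` (with `A` injective by nondegeneracy) this shows that
`m_a` bounds `A` from below; applied to `T = A` (with `A†` injective, being bounded below by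
`m_a > 0`) it shows that no larger constant does.
-/

open Metric ContinuousLinearMap
open scoped InnerProductSpace

section Adjoint

variable {𝕜 E F : Type*} [RCLike 𝕜]
  [NormedAddCommGroup E] [InnerProductSpace 𝕜 E] [CompleteSpace E]
  [NormedAddCommGroup F] [InnerProductSpace 𝕜 F] [CompleteSpace F]

theorem ContinuousLinearMap.denseRange_of_injective_adjoint (T : E →L[𝕜] F)
    (h : Function.Injective (adjoint T)) : DenseRange T := by
  change Dense (LinearMap.range (T : E →ₗ[𝕜] F) : Set F)
  rw [Submodule.dense_iff_topologicalClosure_eq_top, Submodule.topologicalClosure_eq_top_iff]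
  exact (orthogonal_range T).trans (LinearMap.ker_eq_bot.2 h)

theorem ContinuousLinearMap.mul_norm_le_norm_adjoint_apply (T : E →L[𝕜] F) {m : ℝ}
    (hT : ∀ x, m * ‖x‖ ≤ ‖T x‖) (h : Function.Injective (adjoint T)) (y : F) :
    m * ‖y‖ ≤ ‖adjoint T y‖ := by
  refine (T.denseRange_of_injective_adjoint h).induction_on y
    (isClosed_le (by fun_prop) (by fun_prop)) fun x => ?_
  rcases le_or_gt m 0 with hm | hm
  · exact (mul_nonpos_of_nonpos_of_nonneg hm (norm_nonneg _)).trans (norm_nonneg _)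
  have hsq : ‖T x‖ ^ 2 ≤ ‖adjoint T (T x)‖ * ‖x‖ := by
    rw [← inner_self_eq_norm_sq (𝕜 := 𝕜), ← adjoint_inner_left]
    exact re_inner_le_norm _ _
  have key : m * ‖T x‖ * ‖T x‖ ≤ ‖adjoint T (T x)‖ * ‖T x‖ :=
    calc m * ‖T x‖ * ‖T x‖ = m * ‖T x‖ ^ 2 := by ring
      _ ≤ m * (‖adjoint T (T x)‖ * ‖x‖) := by gcongr
      _ = ‖adjoint T (T x)‖ * (m * ‖x‖) := by ring
      _ ≤ ‖adjoint T (T x)‖ * ‖T x‖ := by gcongr; exact hT x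
  rcases (norm_nonneg (T x)).eq_or_lt with hTx | hTx
  · simp [← hTx]
  · exact le_of_mul_le_mul_right key hTx

end Adjoint

theorem ContinuousLinearMap.mem_lowerBounds_image_sphere_iff {𝕜 E F : Type*} [RCLike 𝕜]
    [NormedAddCommGroup E] [NormedSpace 𝕜 E] [NormedAddCommGroup F] [NormedSpace 𝕜 F]
    (T : E →L[𝕜] F) (c : ℝ) :
    c ∈ lowerBounds ((‖T ·‖) '' sphere 0 1) ↔ ∀ x, c * ‖x‖ ≤ ‖T x‖ := by
  constructor
  · rintro hc x
    rcases eq_or_ne x 0 with rfl | hx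
    · simp
    have hx' : 0 < ‖x‖ := norm_pos_iff.2 hx
    have := hc ⟨(‖x‖⁻¹ : 𝕜) • x, by simp [norm_smul, hx'.ne'], rfl⟩
    dsimp only at this
    rw [map_smul, norm_smul, norm_inv, RCLike.norm_ofReal, abs_norm, inv_mul_eq_div,
      le_div_iff₀ hx'] at this
    linarith
  · rintro hc _ ⟨x, hx, rfl⟩
    simpa [mem_sphere_zero_iff_norm.1 hx] using hc x

theorem ContinuousLinearMap.isGLB_image_sphere_of_adjoint {𝕜 E F : Type*} [RCLike 𝕜]
    [NormedAddCommGroup E] [InnerProductSpace 𝕜 E] [CompleteSpace E]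
    [NormedAddCommGroup F] [InnerProductSpace 𝕜 F] [CompleteSpace F]
    (A : E →L[𝕜] F) {m : ℝ} (hm : 0 < m) (hA : IsGLB ((‖adjoint A ·‖) '' sphere 0 1) m)
    (hinj : Function.Injective A) : IsGLB ((‖A ·‖) '' sphere 0 1) m := by
  have hA' := ((adjoint A).mem_lowerBounds_image_sphere_iff m).1 hA.1
  have hinj' : Function.Injective (adjoint A) :=
    (injective_iff_map_eq_zero _).2 fun y hy =>
      norm_le_zero_iff.1 <| nonpos_of_mul_nonpos_right (by simpa [hy] using hA' y) hm
  refine ⟨(A.mem_lowerBounds_image_sphere_iff m).2 fun x => ?_,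
    fun c hc => hA.2 (((adjoint A).mem_lowerBounds_image_sphere_iff c).2 fun y => ?_)⟩
  · simpa using (adjoint A).mul_norm_le_norm_adjoint_apply hA' (by simpa using hinj) x
  · exact A.mul_norm_le_norm_adjoint_apply ((A.mem_lowerBounds_image_sphere_iff c).1 hc) hinj' y

theorem isGreatest_inner_image_sphere {V : Type*} [NormedAddCommGroup V] [InnerProductSpace ℝ V]
    [Nontrivial V] (w : V) : IsGreatest ((⟪w, ·⟫_ℝ) '' sphere 0 1) ‖w‖ := by
  refine ⟨?_, ?_⟩
  · rcases eq_or_ne w 0 with rfl | hw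
    · obtain ⟨v, hv⟩ := exists_norm_eq V zero_le_one
      exact ⟨v, mem_sphere_zero_iff_norm.2 hv, by simp⟩
    · refine ⟨‖w‖⁻¹ • w, by simp [norm_smul, hw], ?_⟩
      dsimp only
      rw [real_inner_smul_right, real_inner_self_eq_norm_mul_norm]
      field_simp
  · rintro _ ⟨v, hv, rfl⟩
    simpa [mem_sphere_zero_iff_norm.1 hv] using real_inner_le_norm w v

theorem LinearMap.exists_inner_eq_of_bound {E F : Type*} [NormedAddCommGroup E] [NormedSpace ℝ E]
    [NormedAddCommGroup F] [InnerProductSpace ℝ F] [CompleteSpace F]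
    (a : E →ₗ[ℝ] F →ₗ[ℝ] ℝ) (M : ℝ) (ha : ∀ x y, |a x y| ≤ M * ‖x‖ * ‖y‖) :
    ∃ A : E →L[ℝ] F, ∀ x y, ⟪A x, y⟫_ℝ = a x y :=
  ⟨(InnerProductSpace.toDual ℝ F).symm.toContinuousLinearEquiv.toContinuousLinearMap.comp
    (a.mkContinuous₂ M ha), fun x y => by simp⟩

theorem setOf_exists_norm_eq_one_eq_image {E β : Type*} [SeminormedAddCommGroup E] (f : E → β) :
    {y | ∃ v : E, ‖v‖ = 1 ∧ y = f v} = f '' sphere 0 1 := by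
  ext; simp [eq_comm]

/-- Inf-sup duality (Babuška): for a bounded, nondegenerate bilinear form
`a : V₁ × V₂ → ℝ` on Hilbert spaces with inf-sup constant
`ma = inf_{‖v₂‖=1} sup_{‖v₁‖=1} a v₁ v₂ > 0`, the transposed inf-sup constant
`inf_{‖v₁‖=1} sup_{‖v₂‖=1} a v₁ v₂` equals `ma` as well. -/
theorem stmt4 {V₁ V₂ : Type*}
    [NormedAddCommGroup V₁] [InnerProductSpace ℝ V₁] [CompleteSpace V₁]
    [NormedAddCommGroup V₂] [InnerProductSpace ℝ V₂] [CompleteSpace V₂]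
    (a : V₁ →ₗ[ℝ] V₂ →ₗ[ℝ] ℝ) (Ma ma : ℝ)
    (hcont : ∀ (v₁ : V₁) (v₂ : V₂), |a v₁ v₂| ≤ Ma * ‖v₁‖ * ‖v₂‖)
    (hnd : ∀ v₁ : V₁, (∀ v₂ : V₂, a v₁ v₂ = 0) → v₁ = 0)
    (hma : 0 < ma)
    (hinfsup : IsGLB {x : ℝ | ∃ v₂ : V₂, ‖v₂‖ = 1 ∧
        x = sSup {y : ℝ | ∃ v₁ : V₁, ‖v₁‖ = 1 ∧ y = a v₁ v₂}} ma) :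
    IsGLB {x : ℝ | ∃ v₁ : V₁, ‖v₁‖ = 1 ∧
        x = sSup {y : ℝ | ∃ v₂ : V₂, ‖v₂‖ = 1 ∧ y = a v₁ v₂}} ma := by
  obtain ⟨A, hA⟩ := a.exists_inner_eq_of_bound Ma hcont
  simp only [setOf_exists_norm_eq_one_eq_image] at hinfsup ⊢
  obtain ⟨_, v₂, hv₂, -⟩ := hinfsup.nonempty
  have : Nontrivial V₂ := nontrivial_of_ne v₂ 0 (ne_of_mem_sphere hv₂ one_ne_zero)
  have : Nontrivial V₁ := by
    by_contra h
    rw [not_nontrivial_iff_subsingleton] at h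
    have := hinfsup.1 ⟨v₂, hv₂, rfl⟩
    simp only [sphere_eq_empty_of_subsingleton one_ne_zero, Set.image_empty, Real.sSup_empty] at this
    exact hma.not_ge this
  have hsup₁ : ∀ v₂, sSup ((a · v₂) '' sphere 0 1) = ‖adjoint A v₂‖ := fun v₂ => by
    have : (a · v₂) = (⟪adjoint A v₂, ·⟫_ℝ) := funext fun v₁ => by
      rw [adjoint_inner_left, real_inner_comm, hA]
    exact this ▸ (isGreatest_inner_image_sphere _).csSup_eq
  have hsup₂ : ∀ v₁, sSup ((a v₁ ·) '' sphere 0 1) = ‖A v₁‖ := fun v₁ => by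
    have : (a v₁ ·) = (⟪A v₁, ·⟫_ℝ) := funext fun v₂ => (hA v₁ v₂).symm
    exact this ▸ (isGreatest_inner_image_sphere _).csSup_eq
  simp only [hsup₁] at hinfsup
  simp only [hsup₂]
  refine A.isGLB_image_sphere_of_adjoint hma hinfsup <| (injective_iff_map_eq_zero _).2
    fun v₁ h => hnd v₁ fun v₂ => ?_
  rw [← hA, h, inner_zero_left]
end

section
/- Let A : V₁ → V₂* be the operator induced by a bilinear form a satisfying continuity with constant M_a, nondegeneracy, and an inf-sup condition with constant m_a > 0. If v ∈ V₁ solves Av = g and ṽ ∈ V₁ is arbitrary, then (1/M_a)‖g − Aṽ‖_{2,*} ≤ ‖v − ṽ‖₁ ≤ (1/m_a)‖g − Aṽ‖_{2,*}. -/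
theorem stmt5_general {V₁ V₂ : Type*}
    [NormedAddCommGroup V₁] [InnerProductSpace ℝ V₁]
    [NormedAddCommGroup V₂] [InnerProductSpace ℝ V₂]
    (A : V₁ →L[ℝ] StrongDual ℝ V₂) (Ma ma : ℝ) (hMa : 0 < Ma) (hma : 0 < ma)
    (hcont : ∀ v₁ : V₁, ‖A v₁‖ ≤ Ma * ‖v₁‖)
    (hinfsup : ∀ v₁ : V₁, ma * ‖v₁‖ ≤ ‖A v₁‖)
    (g : StrongDual ℝ V₂) (v vt : V₁) (hv : A v = g) :
    (1 / Ma) * ‖g - A vt‖ ≤ ‖v - vt‖ ∧ ‖v - vt‖ ≤ (1 / ma) * ‖g - A vt‖ := by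
  have residual_eq : g - A vt = A (v - vt) := by rw [map_sub, hv]
  rw [residual_eq, one_div_mul_eq_div, one_div_mul_eq_div]
  exact ⟨(div_le_iff₀' hMa).2 (hcont _), (le_div_iff₀' hma).2 (hinfsup _)⟩

/-- Error–residual equivalence for the state equation: if `A : V₁ → V₂*` is induced by a
bilinear form with continuity constant `Ma`, nondegeneracy, and inf-sup constant `ma > 0`,
`A v = g`, and `vt` is arbitrary, then
`(1/Ma) ‖g - A vt‖_* ≤ ‖v - vt‖ ≤ (1/ma) ‖g - A vt‖_*`. -/
theorem stmt5 {V₁ V₂ : Type*}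
    [NormedAddCommGroup V₁] [InnerProductSpace ℝ V₁] [CompleteSpace V₁]
    [NormedAddCommGroup V₂] [InnerProductSpace ℝ V₂] [CompleteSpace V₂]
    (A : V₁ →L[ℝ] StrongDual ℝ V₂) (Ma ma : ℝ) (hMa : 0 < Ma) (hma : 0 < ma)
    (hcont : ∀ v₁ : V₁, ‖A v₁‖ ≤ Ma * ‖v₁‖)
    (hinfsup : ∀ v₁ : V₁, ma * ‖v₁‖ ≤ ‖A v₁‖)
    (hnd : ∀ v₁ : V₁, (∀ v₂ : V₂, A v₁ v₂ = 0) → v₁ = 0)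
    (g : StrongDual ℝ V₂) (v vt : V₁) (hv : A v = g) :
    (1 / Ma) * ‖g - A vt‖ ≤ ‖v - vt‖ ∧ ‖v - vt‖ ≤ (1 / ma) * ‖g - A vt‖ :=
  stmt5_general A Ma ma hMa hma hcont hinfsup g v vt hv
end

section
/- Define c_α(v, φ) := −(Π_K(−C*v₂/√α), C*φ₂)_Q − (1/√α)(I v₁, I φ₁)_W on V = V₁ × V₂. Then for all v, w ∈ V, choosing φ = (−(v₁ − w₁), v₂ − w₂), one has c_α(v, φ) − c_α(w, φ) ≥ (1/√α) δ_α(v, w)². -/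
/-!
Firm nonexpansiveness of `Π_K` at `−C*v₂/√α` and `−C*w₂/√α`, multiplied by `√α`, bounds
`√α ‖Π_K(−C*v₂/√α) − Π_K(−C*w₂/√α)‖²` by the projection part of `c_α(v, φ) − c_α(w, φ)`,
while the `I`-parts of that difference add up to exactly `(1/√α) ‖I(v₁ − w₁)‖²`.
-/

open RealInnerProductSpace

theorem norm_sub_sq_le_smul_inner_of_firmlyNonexpansive {E : Type*}
    [NormedAddCommGroup E] [InnerProductSpace ℝ E] {P : E → E}
    (hP : ∀ x y : E, ‖P x - P y‖ ^ 2 ≤ ⟪P x - P y, x - y⟫) (c : ℝ) (x y : E) :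
    ‖P (c • x) - P (c • y)‖ ^ 2 ≤ c * ⟪P (c • x) - P (c • y), x - y⟫ := by
  simpa only [← smul_sub, real_inner_smul_right] using hP (c • x) (c • y)

theorem stmt7_general {V₁ V₂ Q W : Type*}
    [NormedAddCommGroup V₁] [InnerProductSpace ℝ V₁]
    [NormedAddCommGroup V₂] [InnerProductSpace ℝ V₂]
    [NormedAddCommGroup Q] [InnerProductSpace ℝ Q]
    [NormedAddCommGroup W] [InnerProductSpace ℝ W]
    (proj : Q → Q)
    (hmono : ∀ q₁ q₂ : Q, ‖proj q₁ - proj q₂‖ ^ 2 ≤ ⟪proj q₁ - proj q₂, q₁ - q₂⟫)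
    (I : V₁ →L[ℝ] W) (Cstar : V₂ →L[ℝ] Q) (α : ℝ) (hα : 0 < α)
    (cα : (V₁ × V₂) → (V₁ × V₂) → ℝ)
    (hcα : ∀ x φ : V₁ × V₂, cα x φ =
      -⟪proj ((-(Real.sqrt α)⁻¹) • Cstar x.2), Cstar φ.2⟫
        - (Real.sqrt α)⁻¹ * ⟪I x.1, I φ.1⟫)
    (v w : V₁ × V₂) :
    (Real.sqrt α)⁻¹ * (α * ‖proj ((-(Real.sqrt α)⁻¹) • Cstar v.2)
          - proj ((-(Real.sqrt α)⁻¹) • Cstar w.2)‖ ^ 2 + ‖I (v.1 - w.1)‖ ^ 2)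
      ≤ cα v (-(v.1 - w.1), v.2 - w.2) - cα w (-(v.1 - w.1), v.2 - w.2) := by
  set s := Real.sqrt α
  have hs : 0 < s := Real.sqrt_pos.mpr hα
  have hsα : s⁻¹ * α = s := by
    rw [inv_mul_eq_iff_eq_mul₀ hs.ne']
    exact (Real.mul_self_sqrt hα.le).symm
  set pv := proj ((-s⁻¹) • Cstar v.2)
  set pw := proj ((-s⁻¹) • Cstar w.2)
  have hproj : s * ‖pv - pw‖ ^ 2 ≤ -⟪pv - pw, Cstar v.2 - Cstar w.2⟫ := by
    have := mul_le_mul_of_nonneg_left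
      (norm_sub_sq_le_smul_inner_of_firmlyNonexpansive hmono (-s⁻¹) (Cstar v.2) (Cstar w.2))
      hs.le
    rwa [← mul_assoc, mul_neg, mul_inv_cancel₀ hs.ne', neg_one_mul] at this
  have hdiff : cα v (-(v.1 - w.1), v.2 - w.2) - cα w (-(v.1 - w.1), v.2 - w.2)
      = -⟪pv - pw, Cstar v.2 - Cstar w.2⟫ + s⁻¹ * ‖I (v.1 - w.1)‖ ^ 2 := by
    rw [hcα, hcα, ← real_inner_self_eq_norm_sq]
    simp only [map_neg, map_sub, inner_neg_right, inner_sub_left]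
    ring
  rw [hdiff, mul_add, ← mul_assoc, hsα]
  linarith

/-- Generalized coercivity of `c_α`: with
`c_α(x, φ) = −⟪Π_K(−C*x₂/√α), C*φ₂⟫ − (1/√α)⟪I x₁, I φ₁⟫` and the test function
`φ = (−(v₁ − w₁), v₂ − w₂)`, one has `c_α(v,φ) − c_α(w,φ) ≥ (1/√α) δ_α(v,w)²`. -/
theorem stmt7 {V₁ V₂ Q W : Type*}
    [NormedAddCommGroup V₁] [InnerProductSpace ℝ V₁] [CompleteSpace V₁]
    [NormedAddCommGroup V₂] [InnerProductSpace ℝ V₂] [CompleteSpace V₂]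
    [NormedAddCommGroup Q] [InnerProductSpace ℝ Q] [CompleteSpace Q]
    [NormedAddCommGroup W] [InnerProductSpace ℝ W] [CompleteSpace W]
    (K : Set Q) (hne : K.Nonempty) (hcl : IsClosed K) (hconv : Convex ℝ K)
    (proj : Q → Q) (hmem : ∀ q, proj q ∈ K)
    (hmono : ∀ q₁ q₂ : Q, ‖proj q₁ - proj q₂‖ ^ 2 ≤ ⟪proj q₁ - proj q₂, q₁ - q₂⟫)
    (I : V₁ →L[ℝ] W) (Cstar : V₂ →L[ℝ] Q) (α : ℝ) (hα : 0 < α)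
    (cα : (V₁ × V₂) → (V₁ × V₂) → ℝ)
    (hcα : ∀ x φ : V₁ × V₂, cα x φ =
      -⟪proj ((-(Real.sqrt α)⁻¹) • Cstar x.2), Cstar φ.2⟫
        - (Real.sqrt α)⁻¹ * ⟪I x.1, I φ.1⟫)
    (v w : V₁ × V₂) :
    (Real.sqrt α)⁻¹ * (α * ‖proj ((-(Real.sqrt α)⁻¹) • Cstar v.2)
          - proj ((-(Real.sqrt α)⁻¹) • Cstar w.2)‖ ^ 2 + ‖I (v.1 - w.1)‖ ^ 2)
      ≤ cα v (-(v.1 - w.1), v.2 - w.2) - cα w (-(v.1 - w.1), v.2 - w.2) :=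
  stmt7_general proj hmono I Cstar α hα cα hcα v w
end

section
/- Let b_α(v, φ) := a(v₁, φ₂) + a(φ₁, v₂) + c_α(v, φ) on V = V₁ × V₂. Then for all v, w, φ ∈ V, |b_α(v, φ) − b_α(w, φ)| ≤ M_a · d_α(v, w) · ‖φ‖, where d_α(v, w) := ‖v − w‖ + (M / (M_a √α)) δ_α(v, w) and M := max{M_I, M_C}. -/
/-!
The difference `b_α(v,φ) − b_α(w,φ)` is the sum of `a(v₁−w₁,φ₂) + a(φ₁,v₂−w₂)` and
`−(Pv − Pw, C*φ₂) − α^{-1/2}(I(v₁−w₁), Iφ₁)`, where `Pv = Π_K(−C*v₂/√α)`. Bounding each product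
by continuity and then applying Cauchy–Schwarz in `ℝ²` against `(‖φ₂‖, ‖φ₁‖)` gives `M_a ‖v−w‖ ‖φ‖`
for the first sum and `(M/√α) δ_α(v,w) ‖φ‖` for the second, once the factor `√α` is moved
onto `‖Pv − Pw‖`.
-/

open RealInnerProductSpace

lemma mul_add_mul_le_sqrt_mul_sqrt (a b c d : ℝ) :
    a * c + b * d ≤ √(a ^ 2 + b ^ 2) * √(c ^ 2 + d ^ 2) := by
  rw [← Real.sqrt_mul (by positivity)]
  refine le_trans (le_abs_self _) (Real.abs_le_sqrt ?_)
  nlinarith [sq_nonneg (a * d - b * c)]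

lemma abs_add_le_mul_sqrt_mul_sqrt {p q x₁ x₂ y₁ y₂ M : ℝ} (hM : 0 ≤ M)
    (hp : |p| ≤ M * (x₁ * y₁)) (hq : |q| ≤ M * (x₂ * y₂)) :
    |p + q| ≤ M * (√(x₁ ^ 2 + x₂ ^ 2) * √(y₁ ^ 2 + y₂ ^ 2)) :=
  calc |p + q| ≤ |p| + |q| := abs_add_le p q
    _ ≤ M * (x₁ * y₁ + x₂ * y₂) := by linarith
    _ ≤ M * (√(x₁ ^ 2 + x₂ ^ 2) * √(y₁ ^ 2 + y₂ ^ 2)) :=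
      mul_le_mul_of_nonneg_left (mul_add_mul_le_sqrt_mul_sqrt _ _ _ _) hM

lemma abs_inner_apply_le_of_opNorm_le {E F : Type*} [NormedAddCommGroup E] [NormedSpace ℝ E]
    [NormedAddCommGroup F] [InnerProductSpace ℝ F] {T : E →L[ℝ] F} {M : ℝ} (hT : ‖T‖ ≤ M)
    (x : F) (y : E) : |⟪x, T y⟫| ≤ M * (‖x‖ * ‖y‖) :=
  calc |⟪x, T y⟫| ≤ ‖x‖ * ‖T y‖ := abs_real_inner_le_norm x (T y)
    _ ≤ ‖x‖ * (M * ‖y‖) := mul_le_mul_of_nonneg_left (T.le_of_opNorm_le hT y) (norm_nonneg x)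
    _ = M * (‖x‖ * ‖y‖) := by ring

section

variable {V₁ V₂ : Type*} [NormedAddCommGroup V₁] [InnerProductSpace ℝ V₁]
  [NormedAddCommGroup V₂] [InnerProductSpace ℝ V₂]

lemma abs_apply_add_apply_swap_le (a : V₁ →ₗ[ℝ] V₂ →ₗ[ℝ] ℝ) {Ma : ℝ} (hMa : 0 ≤ Ma)
    (hcont : ∀ (v₁ : V₁) (v₂ : V₂), |a v₁ v₂| ≤ Ma * ‖v₁‖ * ‖v₂‖) (x φ : V₁ × V₂) :
    |a x.1 φ.2 + a φ.1 x.2| ≤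
      Ma * (√(‖x.1‖ ^ 2 + ‖x.2‖ ^ 2) * √(‖φ.1‖ ^ 2 + ‖φ.2‖ ^ 2)) := by
  rw [add_comm (‖φ.1‖ ^ 2)]
  refine abs_add_le_mul_sqrt_mul_sqrt hMa ?_ ?_
  · simpa only [mul_assoc] using hcont x.1 φ.2
  · simpa only [mul_assoc, mul_comm ‖φ.1‖] using hcont φ.1 x.2

lemma abs_neg_inner_sub_inv_sqrt_mul_inner_le {Q W : Type*}
    [NormedAddCommGroup Q] [InnerProductSpace ℝ Q] [NormedAddCommGroup W] [InnerProductSpace ℝ W]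
    {I : V₁ →L[ℝ] W} {C : V₂ →L[ℝ] Q} {M α : ℝ} (hI : ‖I‖ ≤ M) (hC : ‖C‖ ≤ M) (hα : 0 < α)
    (p : Q) (r : W) (φ : V₁ × V₂) :
    |-⟪p, C φ.2⟫ - (√α)⁻¹ * ⟪r, I φ.1⟫| ≤
      M / √α * (√(α * ‖p‖ ^ 2 + ‖r‖ ^ 2) * √(‖φ.1‖ ^ 2 + ‖φ.2‖ ^ 2)) := by
  have hsα : 0 < √α := Real.sqrt_pos.2 hα
  have hM : 0 ≤ M := (norm_nonneg I).trans hI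
  rw [add_comm (‖φ.1‖ ^ 2), ← Real.sq_sqrt hα.le, ← mul_pow, Real.sq_sqrt hα.le, sub_eq_add_neg]
  refine abs_add_le_mul_sqrt_mul_sqrt (by positivity) ?_ ?_
  · calc |-⟪p, C φ.2⟫| ≤ M * (‖p‖ * ‖φ.2‖) := by
          rw [abs_neg]; exact abs_inner_apply_le_of_opNorm_le hC p φ.2
      _ = M / √α * (√α * ‖p‖ * ‖φ.2‖) := by field_simp
  · calc |-((√α)⁻¹ * ⟪r, I φ.1⟫)| = (√α)⁻¹ * |⟪r, I φ.1⟫| := by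
          rw [abs_neg, abs_mul, abs_of_pos (inv_pos.2 hsα)]
      _ ≤ (√α)⁻¹ * (M * (‖r‖ * ‖φ.1‖)) :=
          mul_le_mul_of_nonneg_left (abs_inner_apply_le_of_opNorm_le hI r φ.1) (by positivity)
      _ = M / √α * (‖r‖ * ‖φ.1‖) := by ring
end

theorem stmt9_general {V₁ V₂ Q W : Type*}
    [NormedAddCommGroup V₁] [InnerProductSpace ℝ V₁]
    [NormedAddCommGroup V₂] [InnerProductSpace ℝ V₂]
    [NormedAddCommGroup Q] [InnerProductSpace ℝ Q]
    [NormedAddCommGroup W] [InnerProductSpace ℝ W]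
    (a : V₁ →ₗ[ℝ] V₂ →ₗ[ℝ] ℝ) (Ma MI MC M α : ℝ) (hMa : 0 < Ma) (hα : 0 < α)
    (hcont : ∀ (v₁ : V₁) (v₂ : V₂), |a v₁ v₂| ≤ Ma * ‖v₁‖ * ‖v₂‖)
    (I : V₁ →L[ℝ] W) (hI : ‖I‖ ≤ MI)
    (Cstar : V₂ →L[ℝ] Q) (hC : ‖Cstar‖ ≤ MC)
    (hM : M = max MI MC)
    (proj : Q → Q)
    (cα bα : (V₁ × V₂) → (V₁ × V₂) → ℝ)
    (hcα : ∀ x φ : V₁ × V₂, cα x φ =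
      -⟪proj ((-(Real.sqrt α)⁻¹) • Cstar x.2), Cstar φ.2⟫
        - (Real.sqrt α)⁻¹ * ⟪I x.1, I φ.1⟫)
    (hbα : ∀ x φ : V₁ × V₂, bα x φ = a x.1 φ.2 + a φ.1 x.2 + cα x φ)
    (v w φ : V₁ × V₂) :
    |bα v φ - bα w φ| ≤ Ma *
      (Real.sqrt (‖v.1 - w.1‖ ^ 2 + ‖v.2 - w.2‖ ^ 2)
        + M / (Ma * Real.sqrt α) *
          Real.sqrt (α * ‖proj ((-(Real.sqrt α)⁻¹) • Cstar v.2)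
              - proj ((-(Real.sqrt α)⁻¹) • Cstar w.2)‖ ^ 2 + ‖I (v.1 - w.1)‖ ^ 2)) *
      Real.sqrt (‖φ.1‖ ^ 2 + ‖φ.2‖ ^ 2) := by
  set Pv := proj ((-(√α)⁻¹) • Cstar v.2)
  set Pw := proj ((-(√α)⁻¹) • Cstar w.2)
  have hIM : ‖I‖ ≤ M := hM ▸ hI.trans (le_max_left MI MC)
  have hCM : ‖Cstar‖ ≤ M := hM ▸ hC.trans (le_max_right MI MC)
  have hsplit : bα v φ - bα w φ = (a (v - w).1 φ.2 + a φ.1 (v - w).2)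
      + (-⟪Pv - Pw, Cstar φ.2⟫ - (√α)⁻¹ * ⟪I (v.1 - w.1), I φ.1⟫) := by
    simp only [hbα, hcα, Prod.fst_sub, Prod.snd_sub, map_sub, LinearMap.sub_apply,
      inner_sub_left]
    ring
  have hsα : 0 < √α := Real.sqrt_pos.2 hα
  calc |bα v φ - bα w φ|
      ≤ Ma * (√(‖v.1 - w.1‖ ^ 2 + ‖v.2 - w.2‖ ^ 2) * √(‖φ.1‖ ^ 2 + ‖φ.2‖ ^ 2))
        + M / √α * (√(α * ‖Pv - Pw‖ ^ 2 + ‖I (v.1 - w.1)‖ ^ 2) * √(‖φ.1‖ ^ 2 + ‖φ.2‖ ^ 2)) := by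
        rw [hsplit]
        exact (abs_add_le _ _).trans (add_le_add
          (abs_apply_add_apply_swap_le a hMa.le hcont (v - w) φ)
          (abs_neg_inner_sub_inv_sqrt_mul_inner_le hIM hCM hα _ _ φ))
    _ = _ := by field_simp

/-- Continuity of the form `b_α`: with `b_α(x,φ) = a(x₁,φ₂) + a(φ₁,x₂) + c_α(x,φ)`,
for all `v, w, φ ∈ V = V₁ × V₂` one has
`|b_α(v,φ) − b_α(w,φ)| ≤ Ma · d_α(v,w) · ‖φ‖`, where
`d_α(v,w) = ‖v−w‖ + (M/(Ma√α)) δ_α(v,w)`, `M = max{M_I, M_C}`,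
and `‖·‖` is the ℓ²-product norm on `V`. -/
theorem stmt9 {V₁ V₂ Q W : Type*}
    [NormedAddCommGroup V₁] [InnerProductSpace ℝ V₁] [CompleteSpace V₁]
    [NormedAddCommGroup V₂] [InnerProductSpace ℝ V₂] [CompleteSpace V₂]
    [NormedAddCommGroup Q] [InnerProductSpace ℝ Q] [CompleteSpace Q]
    [NormedAddCommGroup W] [InnerProductSpace ℝ W] [CompleteSpace W]
    (a : V₁ →ₗ[ℝ] V₂ →ₗ[ℝ] ℝ) (Ma MI MC M α : ℝ) (hMa : 0 < Ma) (hα : 0 < α)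
    (hcont : ∀ (v₁ : V₁) (v₂ : V₂), |a v₁ v₂| ≤ Ma * ‖v₁‖ * ‖v₂‖)
    (I : V₁ →L[ℝ] W) (hI : ‖I‖ ≤ MI)
    (Cstar : V₂ →L[ℝ] Q) (hC : ‖Cstar‖ ≤ MC)
    (hM : M = max MI MC)
    (K : Set Q) (hne : K.Nonempty) (hcl : IsClosed K) (hconv : Convex ℝ K)
    (proj : Q → Q) (hmem : ∀ q, proj q ∈ K) (hlip : LipschitzWith 1 proj)
    (cα bα : (V₁ × V₂) → (V₁ × V₂) → ℝ)
    (hcα : ∀ x φ : V₁ × V₂, cα x φ =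
      -⟪proj ((-(Real.sqrt α)⁻¹) • Cstar x.2), Cstar φ.2⟫
        - (Real.sqrt α)⁻¹ * ⟪I x.1, I φ.1⟫)
    (hbα : ∀ x φ : V₁ × V₂, bα x φ = a x.1 φ.2 + a φ.1 x.2 + cα x φ)
    (v w φ : V₁ × V₂) :
    |bα v φ - bα w φ| ≤ Ma *
      (Real.sqrt (‖v.1 - w.1‖ ^ 2 + ‖v.2 - w.2‖ ^ 2)
        + M / (Ma * Real.sqrt α) *
          Real.sqrt (α * ‖proj ((-(Real.sqrt α)⁻¹) • Cstar v.2)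
              - proj ((-(Real.sqrt α)⁻¹) • Cstar w.2)‖ ^ 2 + ‖I (v.1 - w.1)‖ ^ 2)) *
      Real.sqrt (‖φ.1‖ ^ 2 + ‖φ.2‖ ^ 2) :=
  stmt9_general a Ma MI MC M α hMa hα hcont I hI Cstar hC hM proj cα bα hcα hbα v w φ
end
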